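/- arXiv:2501.18080 — 2 statements merged into one kernel-verified Lean document; each statement's English description precedes it below -/
import Mathlib

section
/- For i, j ∈ [0, N-1] with j > i and |supp(bin(j)) \ supp(bin(i))| = 1, the Hamming weight of g_i + g_j in G_N = G_2^{⊗n} satisfies w(g_i + g_j) = w(g_i) whenever w(g_j) = w(g_i), i.e., adding such a row g_j of equal weight to g_i preserves the weight 2^{w(bin(i))}. -/
open Matrix Finset

/-- The 2×2 kernel `G₂ = [[1,0],[1,1]]` over `F₂`. -/
def G2 : Matrix (Fin 2) (Fin 2) (ZMod 2) := !![1, 0; 1, 1]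

/-- `GN n = G₂^{⊗n}`, the `n`-th Kronecker power of `G₂`. -/
def GN : (n : ℕ) → Matrix (Fin (2 ^ n)) (Fin (2 ^ n)) (ZMod 2)
  | 0 => 1
  | n + 1 =>
    Matrix.reindex (finProdFinEquiv.trans (finCongr (by rw [pow_succ]; ring)))
      (finProdFinEquiv.trans (finCongr (by rw [pow_succ]; ring)))
      (Matrix.kroneckerMap (· * ·) G2 (GN n))

/-- Hamming weight of a vector over `F₂`. -/
def wt {N : ℕ} (v : Fin N → ZMod 2) : ℕ := (Finset.univ.filter fun j => v j ≠ 0).card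

/-- The support of the binary representation of `k`. -/
def bsupp (k : ℕ) : Finset ℕ := (Finset.range k).filter (fun a => k.testBit a = true)

/-- Number of ones in the binary representation of `k`. -/
def popcount (k : ℕ) : ℕ := (bsupp k).card

/-!
Row `i` of `G₂^{⊗n}` is the indicator of the indices `k` whose binary support lies inside that
of `i`, so it has `2 ^ popcount i` ones. Two rows `i`, `j` overlap exactly on the submasks of
`i &&& j`; if the supports of `i` and `j` have the same size `p` and differ in one element, the
overlap has `2 ^ (p - 1)` elements and `g_i + g_j` has weight `2 ^ p + 2 ^ p - 2 * 2 ^ (p - 1)`.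
-/

theorem mem_bsupp {a k : ℕ} : a ∈ bsupp k ↔ k.testBit a := by
  simp only [bsupp, mem_filter, mem_range, and_iff_right_iff_imp]
  exact fun h => Nat.lt_of_lt_of_le a.lt_two_pow_self (Nat.ge_two_pow_of_testBit h)

theorem bsupp_eq_equivBitIndices : bsupp = Finset.equivBitIndices := by
  ext k a
  simp [mem_bsupp]

theorem bsupp_injective : Function.Injective bsupp := by
  rw [bsupp_eq_equivBitIndices]
  exact Finset.equivBitIndices.injective

theorem bsupp_sum_two_pow (s : Finset ℕ) : bsupp (∑ a ∈ s, 2 ^ a) = s := by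
  rw [bsupp_eq_equivBitIndices]
  exact Finset.equivBitIndices.apply_symm_apply s

theorem sum_two_pow_bsupp (k : ℕ) : ∑ a ∈ bsupp k, 2 ^ a = k := by
  rw [bsupp_eq_equivBitIndices]
  exact Finset.equivBitIndices.symm_apply_apply k

theorem bsupp_and (k m : ℕ) : bsupp (k &&& m) = bsupp k ∩ bsupp m := by
  ext a
  simp [mem_bsupp, Nat.testBit_and]

theorem bsupp_subset_iff_div_mod (n k m : ℕ) : bsupp k ⊆ bsupp m ↔
    bsupp (k / 2 ^ n) ⊆ bsupp (m / 2 ^ n) ∧ bsupp (k % 2 ^ n) ⊆ bsupp (m % 2 ^ n) := by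
  simp only [Finset.subset_iff, mem_bsupp, Nat.testBit_div_two_pow, Nat.testBit_mod_two_pow,
    Bool.and_eq_true, decide_eq_true_eq]
  refine ⟨fun h => ⟨fun _ ha => h ha, fun _ ha => ⟨ha.1, h ha.2⟩⟩, fun ⟨hhigh, hlow⟩ a ha => ?_⟩
  rcases lt_or_ge a n with han | han
  · exact (hlow ⟨han, ha⟩).2
  · obtain ⟨b, rfl⟩ := Nat.exists_eq_add_of_le' han
    exact hhigh ha

def submasks (N m : ℕ) : Finset (Fin N) := univ.filter fun k => bsupp k ⊆ bsupp m

@[simp]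
theorem mem_submasks {N m : ℕ} {k : Fin N} : k ∈ submasks N m ↔ bsupp k ⊆ bsupp m := by
  simp [submasks]

theorem card_submasks {N m : ℕ} (hm : m < N) : #(submasks N m) = 2 ^ popcount m := by
  rw [popcount, ← card_powerset]
  refine card_bij (fun k _ => bsupp k) (fun k hk => by simpa using hk)
    (fun k _ k' _ h => Fin.ext (bsupp_injective h)) fun s hs => ?_
  have hle : ∑ a ∈ s, 2 ^ a ≤ m :=
    (sum_two_pow_bsupp m).subst (sum_le_sum_of_subset (mem_powerset.1 hs))
  exact ⟨⟨_, hle.trans_lt hm⟩, by simpa [bsupp_sum_two_pow] using hs, bsupp_sum_two_pow s⟩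

theorem submasks_inter_submasks (N m m' : ℕ) :
    submasks N m ∩ submasks N m' = submasks N (m &&& m') := by
  ext k
  simp [bsupp_and, subset_inter_iff]

theorem G2_apply (a b : Fin 2) : G2 a b = if bsupp b ⊆ bsupp a then 1 else 0 := by
  fin_cases a <;> fin_cases b <;> decide

theorem GN_succ_apply (n : ℕ) (i k : Fin (2 ^ (n + 1))) :
    GN (n + 1) i k = G2 ⟨i / 2 ^ n, Nat.div_lt_of_lt_mul (by simpa [pow_succ] using i.isLt)⟩
        ⟨k / 2 ^ n, Nat.div_lt_of_lt_mul (by simpa [pow_succ] using k.isLt)⟩ *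
      GN n ⟨i % 2 ^ n, Nat.mod_lt _ (by positivity)⟩ ⟨k % 2 ^ n, Nat.mod_lt _ (by positivity)⟩ := by
  simp [GN, Matrix.kroneckerMap, finProdFinEquiv, Fin.divNat, Fin.modNat]

theorem GN_apply (n : ℕ) (i k : Fin (2 ^ n)) :
    GN n i k = if k ∈ submasks (2 ^ n) i then 1 else 0 := by
  induction n with
  | zero =>
    fin_cases i; fin_cases k
    simp [GN]
  | succ n ih =>
    simp only [GN_succ_apply, G2_apply, ih, ite_zero_mul_ite_zero, mul_one, mem_submasks,
      bsupp_subset_iff_div_mod n k i]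

theorem wt_indicator_add_indicator {N : ℕ} (A B : Finset (Fin N)) :
    wt ((fun k => if k ∈ A then 1 else 0) + (fun k => if k ∈ B then 1 else 0) : Fin N → ZMod 2)
      + 2 * #(A ∩ B) = #A + #B := by
  have hsupp : (univ.filter fun k => ((fun k => if k ∈ A then 1 else 0) +
      (fun k => if k ∈ B then 1 else 0) : Fin N → ZMod 2) k ≠ 0) = (A \ B) ∪ (B \ A) := by
    ext k
    by_cases hA : k ∈ A <;> by_cases hB : k ∈ B <;> simp [hA, hB, CharTwo.add_self_eq_zero]
  rw [wt, hsupp, card_union_of_disjoint disjoint_sdiff_sdiff]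
  have hA := card_sdiff_add_card_inter A B
  have hB := card_sdiff_add_card_inter B A
  rw [inter_comm B A] at hB
  omega

theorem weight_preserved_single_extra_bit_general (n : ℕ) (i j : Fin (2 ^ n))
    (hpop : popcount j.val = popcount i.val)
    (hdiff : (bsupp j.val \ bsupp i.val).card = 1) :
    wt (GN n i + GN n j) = 2 ^ popcount i.val := by
  have hcommon : popcount (i &&& j) + 1 = popcount i := by
    rw [← hpop, popcount, popcount, bsupp_and, inter_comm, ← hdiff, add_comm]
    exact card_sdiff_add_card_inter _ _
  have hweight := wt_indicator_add_indicator (submasks (2 ^ n) i) (submasks (2 ^ n) j)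
  rw [submasks_inter_submasks, card_submasks i.isLt, card_submasks j.isLt,
    card_submasks (Nat.and_le_left.trans_lt i.isLt), hpop, ← hcommon, pow_succ] at hweight
  rw [funext (GN_apply n i), funext (GN_apply n j), ← hcommon, pow_succ]
  omega

theorem weight_preserved_single_extra_bit (n : ℕ) (i j : Fin (2 ^ n))
    (hij : i < j) (hpop : popcount j.val = popcount i.val)
    (hdiff : (bsupp j.val \ bsupp i.val).card = 1) :
    wt (GN n i + GN n j) = 2 ^ popcount i.val :=
  weight_preserved_single_extra_bit_general n i j hpop hdiff
end

section
/- If I^c ∩ (i, N-1] = ∅ (i.e., all coordinates greater than i are information coordinates), then for any upper-triangular unit-diagonal pre-transformation matrix P over F_2, the set of codewords in the coset of leader i is identical with and without pre-transformation: {v·P·G_N : min supp(v)=i, supp(v)⊆{i}∪(i,N-1]} = {v·G_N : min supp(v)=i, supp(v)⊆{i}∪(i,N-1]}. In particular, the number of minimum-weight codewords in this coset is unchanged by precoding. -/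
open Matrix Finset

theorem incapable_coset (n : ℕ)
    (P : Matrix (Fin (2 ^ n)) (Fin (2 ^ n)) (ZMod 2))
    (hPut : ∀ a b : Fin (2 ^ n), b < a → P a b = 0)
    (hPdiag : ∀ a : Fin (2 ^ n), P a a = 1)
    (I : Finset (Fin (2 ^ n))) (i : Fin (2 ^ n)) (hi : i ∈ I)
    (hIc : ∀ j : Fin (2 ^ n), i < j → j ∈ I) :
    (fun v => Matrix.vecMul (Matrix.vecMul v P) (GN n)) ''
        {v : Fin (2 ^ n) → ZMod 2 | v i = 1 ∧ ∀ j, v j ≠ 0 → i ≤ j} =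
      (fun v => Matrix.vecMul v (GN n)) ''
        {v : Fin (2 ^ n) → ZMod 2 | v i = 1 ∧ ∀ j, v j ≠ 0 → i ≤ j} ∧
    ∀ w : ℕ,
      Set.ncard {x ∈ (fun v => Matrix.vecMul (Matrix.vecMul v P) (GN n)) ''
          {v : Fin (2 ^ n) → ZMod 2 | v i = 1 ∧ ∀ j, v j ≠ 0 → i ≤ j} | wt x = w} =
      Set.ncard {x ∈ (fun v => Matrix.vecMul v (GN n)) ''
          {v : Fin (2 ^ n) → ZMod 2 | v i = 1 ∧ ∀ j, v j ≠ 0 → i ≤ j} | wt x = w} := by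
  set S : Set (Fin (2 ^ n) → ZMod 2) :=
    {v : Fin (2 ^ n) → ZMod 2 | v i = 1 ∧ ∀ j, v j ≠ 0 → i ≤ j} with hS
  -- P is invertible
  have hdet : P.det = 1 := by
    rw [Matrix.det_of_upperTriangular (fun a b h => hPut a b h)]
    exact Finset.prod_eq_one fun a _ => hPdiag a
  have hPinv : IsUnit P.det := by rw [hdet]; exact isUnit_one
  have hinj : Function.Injective (fun v => Matrix.vecMul v P) := by
    intro v w h
    have := congrArg (fun u => Matrix.vecMul u P⁻¹) h
    simpa [Matrix.vecMul_vecMul, Matrix.mul_nonsing_inv P hPinv] using this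
  -- MapsTo
  have hmaps : Set.MapsTo (fun v => Matrix.vecMul v P) S S := by
    intro v hv
    obtain ⟨hvi, hvs⟩ := hv
    constructor
    · show Matrix.vecMul v P i = 1
      rw [Matrix.vecMul, dotProduct]
      rw [Finset.sum_eq_single i]
      · rw [hPdiag i, hvi, mul_one]
      · intro b _ hb
        rcases lt_or_gt_of_ne hb with h | h
        · have : v b = 0 := by
            by_contra hvb
            exact absurd (hvs b hvb) (not_le.mpr h)
          rw [this, zero_mul]
        · rw [hPut b i h, mul_zero]
      · intro h; exact absurd (Finset.mem_univ i) h
    · intro j hj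
      by_contra hij
      push_neg at hij
      apply hj
      show Matrix.vecMul v P j = 0
      rw [Matrix.vecMul, dotProduct]
      apply Finset.sum_eq_zero
      intro b _
      by_cases hvb : v b = 0
      · rw [hvb, zero_mul]
      · have hib : i ≤ b := hvs b hvb
        have : j < b := lt_of_lt_of_le hij hib
        rw [hPut b j this, mul_zero]
  -- finite, so bijective on S
  have hfin : S.Finite := Set.toFinite S
  have hbij : Set.BijOn (fun v => Matrix.vecMul v P) S S :=
    (Set.Finite.injOn_iff_bijOn_of_mapsTo hfin hmaps).mp (hinj.injOn)
  have himg : (fun v => Matrix.vecMul v P) '' S = S := hbij.image_eq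
  have key : (fun v => Matrix.vecMul (Matrix.vecMul v P) (GN n)) '' S
      = (fun v => Matrix.vecMul v (GN n)) '' S := by
    rw [show (fun v => Matrix.vecMul (Matrix.vecMul v P) (GN n))
        = (fun v => Matrix.vecMul v (GN n)) ∘ (fun v => Matrix.vecMul v P) from rfl,
      Set.image_comp, himg]
  exact ⟨key, fun w => by rw [key]⟩
end
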